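/- Let Z be a nonzero real or complex Banach space which is lush, and let P : Z → Z be a linear L-projection (i.e. ‖z‖ = ‖Pz‖ + ‖z − Pz‖ for all z ∈ Z) with range X. Then the subspace X, equipped with the norm inherited from Z, is lush. -/

import Mathlib

open scoped BigOperators

/-- The open slice `S(B_X, f, α) = {x ∈ B_X : Re f(x) > 1 - α}` of the closed unit ball. -/
def Slice (𝕜 : Type*) {X : Type*} [RCLike 𝕜] [NormedAddCommGroup X] [NormedSpace 𝕜 X]
    (f : X →L[𝕜] 𝕜) (α : ℝ) : Set X :=
  {x | ‖x‖ ≤ 1 ∧ 1 - α < RCLike.re (f x)}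

/-- The convex hull of `𝕋 · S(B_X, f, α)`, i.e. all convex combinations of rotated points of
the slice `S(B_X, f, α)`. -/
def ConvRotSlice (𝕜 : Type*) {X : Type*} [RCLike 𝕜] [NormedAddCommGroup X] [NormedSpace 𝕜 X]
    (f : X →L[𝕜] 𝕜) (α : ℝ) : Set X :=
  {x | ∃ (n : ℕ) (t : Fin n → ℝ) (ω : Fin n → 𝕜) (s : Fin n → X),
    (∀ k, 0 ≤ t k) ∧ (∑ k, t k) = 1 ∧ (∀ k, ‖ω k‖ = 1) ∧ (∀ k, s k ∈ Slice 𝕜 f α) ∧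
    x = ∑ k, ((t k : 𝕜) * ω k) • s k}

/-- A Banach space `X` over `𝕜 = ℝ` or `ℂ` is *lush* if for all `u, v` in the unit sphere and
every `ε > 0` there is a norm-one functional `f` with `u ∈ S(B_X, f, ε)` and
`dist(v, conv(𝕋 · S(B_X, f, ε))) < ε`. -/
def IsLush (𝕜 X : Type*) [RCLike 𝕜] [NormedAddCommGroup X] [NormedSpace 𝕜 X] : Prop :=
  ∀ u v : X, ‖u‖ = 1 → ‖v‖ = 1 → ∀ ε : ℝ, 0 < ε →
    ∃ f : X →L[𝕜] 𝕜, ‖f‖ = 1 ∧ u ∈ Slice 𝕜 f ε ∧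
      Metric.infDist v (ConvRotSlice 𝕜 f ε) < ε

/-!
Apply lushness of `Z` to `u, v` with a small parameter `δ`, obtaining `f` and a rotated convex
combination `y = ∑ tₖ ωₖ sₖ` of points of `S(B_Z, f, δ)` within `δ` of `v`. Since
`‖s‖ = ‖P s‖ + ‖s - P s‖`, the functional `f` loses at most `‖s - P s‖` on the complementary part,
so `Re f (P sₖ) > ‖P sₖ‖ - δ`. Normalising `f|_X` costs only a factor close to `1`. As
`‖v - P y‖ < δ`, the defect `∑ tₖ (1 - ‖P sₖ‖)` is below `δ`: the `P sₖ` of norm at least `1/2`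
can be normalised into the slice of `B_X` at small cost, and the remaining ones carry total
weight `O(δ)` and may be replaced by `u`.
-/

open RCLike

section Slices

variable {𝕜 X : Type*} [RCLike 𝕜] [NormedAddCommGroup X] [NormedSpace 𝕜 X]

lemma slice_subset_convRotSlice (f : X →L[𝕜] 𝕜) (α : ℝ) : Slice 𝕜 f α ⊆ ConvRotSlice 𝕜 f α :=
  fun x hx => ⟨1, fun _ => 1, fun _ => 1, fun _ => x, by simp, by simp, by simp, fun _ => hx,
    by simp⟩

lemma norm_sum_ofReal_mul_smul_le {n : ℕ} {t : Fin n → ℝ} {ω : Fin n → 𝕜} (ht : ∀ k, 0 ≤ t k)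
    (hω : ∀ k, ‖ω k‖ = 1) (z : Fin n → X) :
    ‖∑ k, ((t k : 𝕜) * ω k) • z k‖ ≤ ∑ k, t k * ‖z k‖ :=
  (norm_sum_le _ _).trans_eq <| Finset.sum_congr rfl fun k _ => by
    rw [norm_smul, norm_mul, hω k, mul_one, norm_ofReal, abs_of_nonneg (ht k)]

lemma sum_mul_one_sub_norm_lt {n : ℕ} {t : Fin n → ℝ} {ω : Fin n → 𝕜} {z : Fin n → X} {v : X}
    {δ : ℝ} (ht : ∀ k, 0 ≤ t k) (hts : ∑ k, t k = 1) (hω : ∀ k, ‖ω k‖ = 1) (hv : ‖v‖ = 1)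
    (hvz : ‖v - ∑ k, ((t k : 𝕜) * ω k) • z k‖ < δ) :
    ∑ k, t k * (1 - ‖z k‖) < δ := by
  have hsum : ∑ k, t k * (1 - ‖z k‖) = 1 - ∑ k, t k * ‖z k‖ := by
    simp only [mul_sub, mul_one, Finset.sum_sub_distrib, hts]
  have := norm_sub_norm_le v (∑ k, ((t k : 𝕜) * ω k) • z k)
  linarith [norm_sum_ofReal_mul_smul_le ht hω z]

lemma exists_mem_slice_norm_sub_le {g : X →L[𝕜] 𝕜} {ε : ℝ} (hε : 0 ≤ ε) {u z : X}
    (hu : u ∈ Slice 𝕜 g ε) (hz : ‖z‖ ≤ 1) (hgz : ‖z‖ - ε / 2 < re (g z)) :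
    ∃ x ∈ Slice 𝕜 g ε, ‖z - x‖ ≤ 4 * (1 - ‖z‖) := by
  by_cases hbig : 1 / 2 ≤ ‖z‖
  · have hz0 : 0 < ‖z‖ := by linarith
    refine ⟨(‖z‖⁻¹ : 𝕜) • z, ⟨(norm_smul_inv_norm (norm_pos_iff.1 hz0)).le, ?_⟩, ?_⟩
    · rw [map_smul, smul_eq_mul, ← ofReal_inv, re_ofReal_mul, ← div_eq_inv_mul,
        lt_div_iff₀ hz0]
      nlinarith
    · calc ‖z - (‖z‖⁻¹ : 𝕜) • z‖ = ‖((1 - ‖z‖⁻¹ : ℝ) : 𝕜) • z‖ := by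
            rw [ofReal_sub, ofReal_one, ofReal_inv, sub_smul, one_smul]
        _ = 1 - ‖z‖ := by
            rw [norm_smul, norm_ofReal, abs_of_nonpos, neg_sub, sub_mul,
              inv_mul_cancel₀ hz0.ne', one_mul]
            linarith [one_le_inv_iff₀.2 ⟨hz0, hz⟩]
        _ ≤ 4 * (1 - ‖z‖) := by linarith
  · refine ⟨u, hu, ?_⟩
    linarith [norm_sub_le z u, hu.1]

lemma exists_mem_convRotSlice_norm_sub_le {g : X →L[𝕜] 𝕜} {ε : ℝ} (hε : 0 ≤ ε) {u : X}
    (hu : u ∈ Slice 𝕜 g ε) {n : ℕ} {t : Fin n → ℝ} {ω : Fin n → 𝕜} {z : Fin n → X}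
    (ht : ∀ k, 0 ≤ t k) (hts : ∑ k, t k = 1) (hω : ∀ k, ‖ω k‖ = 1) (hz : ∀ k, ‖z k‖ ≤ 1)
    (hgz : ∀ k, ‖z k‖ - ε / 2 < re (g (z k))) :
    ∃ w ∈ ConvRotSlice 𝕜 g ε,
      ‖∑ k, ((t k : 𝕜) * ω k) • z k - w‖ ≤ 4 * ∑ k, t k * (1 - ‖z k‖) := by
  choose x hx hzx using fun k => exists_mem_slice_norm_sub_le hε hu (hz k) (hgz k)
  refine ⟨_, ⟨n, t, ω, x, ht, hts, hω, hx, rfl⟩, ?_⟩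
  simp only [← Finset.sum_sub_distrib, ← smul_sub, Finset.mul_sum]
  refine (norm_sum_ofReal_mul_smul_le ht hω _).trans (Finset.sum_le_sum fun k _ => ?_)
  nlinarith [mul_le_mul_of_nonneg_left (hzx k) (ht k)]

lemma sub_lt_re_of_mem_slice {f : X →L[𝕜] 𝕜} (hf : ‖f‖ ≤ 1) {δ : ℝ} {z w : X}
    (hzw : ‖z‖ = ‖w‖ + ‖z - w‖) (hz : z ∈ Slice 𝕜 f δ) : ‖w‖ - δ < re (f w) := by
  have hzw' : re (f (z - w)) ≤ ‖z - w‖ :=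
    (re_le_norm _).trans ((f.le_opNorm _).trans (mul_le_of_le_one_left (norm_nonneg _) hf))
  rw [map_sub, map_sub] at hzw'
  linarith [hz.1, hz.2]

end Slices

lemma Submodule.exists_norm_eq_one_restrict {𝕜 Z : Type*} [RCLike 𝕜] [NormedAddCommGroup Z]
    [NormedSpace 𝕜 Z] (X : Submodule 𝕜 Z) {f : Z →L[𝕜] 𝕜} (hf : ‖f‖ ≤ 1) {δ : ℝ}
    (hδ : δ ≤ 1 / 2) {u : X} (hu : ‖u‖ = 1) (hfu : 1 - δ < re (f u)) :
    ∃ g : X →L[𝕜] 𝕜, ‖g‖ = 1 ∧ 1 - δ < re (g u) ∧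
      ∀ x : X, ‖x‖ - δ < re (f x) → ‖x‖ - 2 * δ < re (g x) := by
  set F := f.comp X.subtypeL
  have hF1 : ‖F‖ ≤ 1 :=
    (f.opNorm_comp_le _).trans (mul_le_one₀ hf (norm_nonneg _) X.norm_subtypeL_le)
  have hFu : 1 - δ < ‖F‖ := by
    have := (re_le_norm (F u)).trans (F.le_opNorm u)
    rw [hu, mul_one] at this
    exact hfu.trans_le this
  have hF0 : 0 < ‖F‖ := by linarith
  have hre : ∀ x, re (((‖F‖⁻¹ : 𝕜) • F) x) = re (f x) / ‖F‖ := fun x => by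
    rw [smul_apply, smul_eq_mul, ← ofReal_inv, re_ofReal_mul, div_eq_inv_mul]
    rfl
  refine ⟨(‖F‖⁻¹ : 𝕜) • F, norm_smul_inv_norm (norm_pos_iff.1 hF0), ?_, fun x hx => ?_⟩
  · rw [hre, lt_div_iff₀ hF0]
    nlinarith
  · rw [hre, lt_div_iff₀ hF0]
    nlinarith [norm_nonneg x]

theorem isLush_of_lSummand_general {𝕜 Z : Type*} [RCLike 𝕜] [NormedAddCommGroup Z] [NormedSpace 𝕜 Z]
    (hZ : IsLush 𝕜 Z)
    (P : Z →L[𝕜] Z) (hproj : ∀ z, P (P z) = P z)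
    (hL : ∀ z, ‖z‖ = ‖P z‖ + ‖z - P z‖)
    (X : Submodule 𝕜 Z) (hX : ∀ z, z ∈ X ↔ ∃ w, P w = z) :
    IsLush 𝕜 X := by
  intro u v hu hv ε hε
  set δ := min ε 1 / 10 with hδ
  have hδ0 : 0 < δ := by positivity
  have hδε : δ ≤ ε / 10 := by have := min_le_left ε 1; linarith
  have hδ1 : δ ≤ 1 / 10 := by have := min_le_right ε 1; linarith
  obtain ⟨f, hf, hfu, hfv⟩ := hZ u v hu hv δ hδ0
  obtain ⟨_, ⟨n, t, ω, s, ht, hts, hω, hs, rfl⟩, hvy⟩ :=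
    (Metric.infDist_lt_iff ⟨_, slice_subset_convRotSlice f δ hfu⟩).1 hfv
  let Q : Z →L[𝕜] X := P.codRestrict X fun z => (hX _).2 ⟨z, rfl⟩
  have hQ : ∀ z, ‖Q z‖ ≤ ‖z‖ := fun z => by
    rw [hL z]
    exact le_add_of_nonneg_right (norm_nonneg _)
  have hQv : Q v = v := by
    obtain ⟨w, hw⟩ := (hX v).1 v.2
    exact Subtype.ext (by simp [Q, ← hw, hproj])
  have hvQy : ‖v - ∑ k, ((t k : 𝕜) * ω k) • Q (s k)‖ < δ := by
    rw [dist_eq_norm] at hvy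
    simpa [hQv, map_sum, map_smul] using (hQ _).trans_lt hvy
  obtain ⟨g, hg, hgu, hgQ⟩ := X.exists_norm_eq_one_restrict hf.le (by linarith) hu hfu.2
  obtain ⟨w, hw, hyw⟩ := exists_mem_convRotSlice_norm_sub_le hε.le (u := u)
    ⟨hu.le, by linarith⟩ ht hts hω (fun k => (hQ _).trans (hs k).1)
    fun k => (hgQ _ (sub_lt_re_of_mem_slice hf.le (hL _) (hs k))).trans_le' (by linarith)
  refine ⟨g, hg, ⟨hu.le, by linarith⟩, (Metric.infDist_le_dist_of_mem hw).trans_lt ?_⟩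
  have hdefect := sum_mul_one_sub_norm_lt ht hts hω hv hvQy
  calc dist v w
      ≤ ‖v - ∑ k, ((t k : 𝕜) * ω k) • Q (s k)‖ + ‖∑ k, ((t k : 𝕜) * ω k) • Q (s k) - w‖ :=
        dist_eq_norm v w ▸ norm_sub_le_norm_sub_add_norm_sub _ _ _
    _ < ε := by linarith

/-- An L-summand of a lush space is lush. -/
theorem isLush_of_lSummand {𝕜 Z : Type*} [RCLike 𝕜] [NormedAddCommGroup Z] [NormedSpace 𝕜 Z]
    [CompleteSpace Z] [Nontrivial Z] (hZ : IsLush 𝕜 Z)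
    (P : Z →L[𝕜] Z) (hproj : ∀ z, P (P z) = P z)
    (hL : ∀ z, ‖z‖ = ‖P z‖ + ‖z - P z‖)
    (X : Submodule 𝕜 Z) (hX : ∀ z, z ∈ X ↔ ∃ w, P w = z) :
    IsLush 𝕜 X :=
  isLush_of_lSummand_general hZ P hproj hL X hX
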